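/- arXiv:1603.00920 — 5 statements merged into one kernel-verified Lean document; each statement's English description precedes it below -/
import Mathlib

section
/- European Delta formula: For the exponential Lévy model X_T = x exp(X̃_T) and any Φ ∈ C¹(ℝ) with bounded derivative, ∂/∂x E[e^{−rT} Φ(X_T)] = (e^{−rT}/(xσT)) E[Φ(X_T) W_T]. -/
/-!
Differentiating under the integral sign (the payoff grows at most linearly and `E[exp X̃] < ∞`)
gives `∂ₓ E[Φ(x e^{X̃})] = E[Φ'(x e^{X̃}) e^{X̃}]`. Since `W_T ~ N(0, T)` is independent of the
jump part, Fubini reduces `E[Φ(x e^{X̃}) W_T]` to Gaussian integration by parts in `W_T` for each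
fixed value of the jump part, and this yields `E[Φ(X_T) W_T] = T x σ E[Φ'(X_T) e^{X̃}]`: the
Malliavin duality `E[Φ'(F) G] = E[Φ(F) δ(u G / ∫ D_t F u_t dt)]` with `δ(1_{[0,T]}) = W_T`.
-/

open MeasureTheory ProbabilityTheory Real
open scoped NNReal

lemma abs_le_abs_apply_zero_add_of_abs_deriv_le {Φ : ℝ → ℝ} (hΦ : Differentiable ℝ Φ) {C : ℝ}
    (hC : ∀ y, |deriv Φ y| ≤ C) (y : ℝ) : |Φ y| ≤ |Φ 0| + C * |y| := by
  have hC0 : 0 ≤ C := (abs_nonneg _).trans (hC 0)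
  have hlip : LipschitzWith C.toNNReal Φ :=
    lipschitzWith_of_nnnorm_deriv_le hΦ fun y => by
      rw [← NNReal.coe_le_coe, coe_nnnorm, Real.coe_toNNReal _ hC0]; exact hC y
  have := hlip.dist_le_mul y 0
  rw [Real.dist_eq, Real.dist_eq, sub_zero, Real.coe_toNNReal _ hC0] at this
  linarith [abs_sub_abs_le_abs_sub (Φ y) (Φ 0)]

lemma hasDerivAt_integral_comp_mul {Ω : Type*} [MeasurableSpace Ω] {μ : Measure Ω}
    [IsFiniteMeasure μ] {Y : Ω → ℝ} (hY : Integrable Y μ) {Φ : ℝ → ℝ}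
    (hΦ : Differentiable ℝ Φ) {C : ℝ} (hC : ∀ y, |deriv Φ y| ≤ C) (x : ℝ) :
    HasDerivAt (fun y => ∫ ω, Φ (y * Y ω) ∂μ) (∫ ω, deriv Φ (x * Y ω) * Y ω ∂μ) x := by
  have hΦ_meas (y : ℝ) : AEStronglyMeasurable (fun ω => Φ (y * Y ω)) μ :=
    hΦ.continuous.comp_aestronglyMeasurable (hY.1.const_mul y)
  have hderiv_meas : AEStronglyMeasurable (fun ω => deriv Φ (x * Y ω) * Y ω) μ :=
    ((measurable_deriv Φ).comp_aemeasurable (hY.1.aemeasurable.const_mul x)).aestronglyMeasurable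
      |>.mul hY.1
  refine (hasDerivAt_integral_of_dominated_loc_of_deriv_le (bound := fun ω => C * |Y ω|)
    (F' := fun y ω => deriv Φ (y * Y ω) * Y ω) Filter.univ_mem
    (Filter.Eventually.of_forall hΦ_meas) ?_ hderiv_meas (ae_of_all _ fun ω y _ => ?_)
    (hY.abs.const_mul C) (ae_of_all _ fun ω y _ => ?_)).2
  · refine ((integrable_const |Φ 0|).add ((hY.abs.const_mul (C * |x|)))).mono' (hΦ_meas x)
      (ae_of_all _ fun ω => ?_)
    refine (abs_le_abs_apply_zero_add_of_abs_deriv_le hΦ hC _).trans_eq ?_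
    simp only [Pi.add_apply, abs_mul]; ring
  · rw [norm_mul, Real.norm_eq_abs, Real.norm_eq_abs]
    exact mul_le_mul_of_nonneg_right (hC _) (abs_nonneg _)
  · exact (hΦ _).hasDerivAt.comp y (hasDerivAt_mul_const (Y ω))

section Gaussian

variable {m : ℝ} {v : ℝ≥0}

lemma hasDerivAt_gaussianPDFReal (w : ℝ) :
    HasDerivAt (gaussianPDFReal m v) (-((w - m) / v) * gaussianPDFReal m v w) w := by
  have h : HasDerivAt (fun w => -(w - m) ^ 2 / (2 * v)) (-((w - m) / v)) w := by
    refine ((((hasDerivAt_id w).sub_const m).pow 2).neg.div_const (2 * (v : ℝ))).congr_deriv ?_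
    by_cases hv : (v : ℝ) = 0
    · simp [hv]
    · field_simp; simp
  rw [gaussianPDFReal_def]
  exact (h.exp.const_mul (√(2 * π * v))⁻¹).congr_deriv (by ring)

lemma integrable_gaussianReal_iff (hv : v ≠ 0) {f : ℝ → ℝ} :
    Integrable f (gaussianReal m v) ↔ Integrable (fun w => gaussianPDFReal m v w * f w) := by
  rw [gaussianReal_of_var_ne_zero _ hv, gaussianPDF_def,
    integrable_withDensity_iff (measurable_gaussianPDFReal m v).ennreal_ofReal
      (ae_of_all _ fun _ => ENNReal.ofReal_lt_top)]
  simp_rw [ENNReal.toReal_ofReal (gaussianPDFReal_nonneg m v _), mul_comm]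

/-- Stein's lemma. -/
lemma integral_mul_sub_gaussianReal (hv : v ≠ 0) {g g' : ℝ → ℝ}
    (hg : ∀ w, HasDerivAt g (g' w) w) (hg_int : Integrable g (gaussianReal m v))
    (hgw_int : Integrable (fun w => g w * (w - m)) (gaussianReal m v))
    (hg'_int : Integrable g' (gaussianReal m v)) :
    ∫ w, g w * (w - m) ∂gaussianReal m v = v * ∫ w, g' w ∂gaussianReal m v := by
  rw [integrable_gaussianReal_iff hv] at hg_int hgw_int hg'_int
  have hv' : (v : ℝ) ≠ 0 := mod_cast hv
  have ibp := integral_mul_deriv_eq_deriv_mul_of_integrable (fun w _ => hg w)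
    (fun w _ => hasDerivAt_gaussianPDFReal (m := m) (v := v) w)
    ((hgw_int.const_mul (-(v : ℝ)⁻¹)).congr
      (ae_of_all _ fun w => by simp only [Pi.mul_apply]; ring))
    (hg'_int.congr (ae_of_all _ fun w => by simp only [Pi.mul_apply]; ring))
    (hg_int.congr (ae_of_all _ fun w => by simp only [Pi.mul_apply]; ring))
  simp_rw [integral_gaussianReal_eq_integral_smul hv, smul_eq_mul]
  calc ∫ w, gaussianPDFReal m v w * (g w * (w - m))
      = -v * ∫ w, g w * (-((w - m) / v) * gaussianPDFReal m v w) := by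
        rw [← integral_const_mul]; congr 1; ext w; field_simp
    _ = v * ∫ w, gaussianPDFReal m v w * g' w := by
        rw [ibp, neg_mul, mul_neg, neg_neg]; simp only [mul_comm (g' _)]

lemma integrable_abs_mul_exp_mul_gaussianReal (t : ℝ) :
    Integrable (fun w => |w| * exp (t * w)) (gaussianReal m v) := by
  simpa using integrable_pow_abs_mul_exp_of_mem_interior_integrableExpSet
    (X := fun w : ℝ => w) (μ := gaussianReal m v) (v := t) (by simp) 1

lemma integral_comp_mul_exp_mul_id_gaussianReal (hv : v ≠ 0) {Φ : ℝ → ℝ}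
    (hΦ : Differentiable ℝ Φ) {C : ℝ} (hC : ∀ y, |deriv Φ y| ≤ C) (a b σ : ℝ) :
    ∫ w, Φ (a * exp (b + σ * w)) * w ∂gaussianReal 0 v
      = v * (a * σ) * ∫ w, deriv Φ (a * exp (b + σ * w)) * exp (b + σ * w) ∂gaussianReal 0 v := by
  have hΦc := hΦ.continuous
  have hΦ_le (w : ℝ) : |Φ (a * exp (b + σ * w))| ≤ |Φ 0| + C * |a| * exp b * exp (σ * w) := by
    refine (abs_le_abs_apply_zero_add_of_abs_deriv_le hΦ hC _).trans_eq ?_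
    rw [abs_mul, abs_exp, exp_add]; ring
  have hderiv (w : ℝ) : HasDerivAt (fun w => Φ (a * exp (b + σ * w)))
      (deriv Φ (a * exp (b + σ * w)) * (a * (exp (b + σ * w) * σ))) w :=
    (hΦ _).hasDerivAt.comp w
      ((((hasDerivAt_id w).const_mul σ).const_add b).exp.const_mul a |>.congr_deriv (by simp))
  have hg : Integrable (fun w => Φ (a * exp (b + σ * w))) (gaussianReal 0 v) :=
    ((integrable_const |Φ 0|).add ((integrable_exp_mul_gaussianReal σ).const_mul
      (C * |a| * exp b))).mono' (by fun_prop) (ae_of_all _ hΦ_le)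
  have hgw : Integrable (fun w => Φ (a * exp (b + σ * w)) * (w - 0)) (gaussianReal 0 v) := by
    refine (((integrable_abs_mul_exp_mul_gaussianReal 0).const_mul |Φ 0|).add
      ((integrable_abs_mul_exp_mul_gaussianReal σ).const_mul (C * |a| * exp b))).mono'
      (by fun_prop) (ae_of_all _ fun w => ?_)
    simp only [sub_zero, norm_mul, Real.norm_eq_abs, zero_mul, exp_zero, Pi.add_apply]
    nlinarith [hΦ_le w, abs_nonneg w]
  have hg' : Integrable (fun w => deriv Φ (a * exp (b + σ * w)) * (a * (exp (b + σ * w) * σ)))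
      (gaussianReal 0 v) := by
    refine ((integrable_exp_mul_gaussianReal σ).const_mul (C * |a| * exp b * |σ|)).mono'
      (((measurable_deriv Φ).comp (by fun_prop)).aestronglyMeasurable.mul (by fun_prop))
      (ae_of_all _ fun w => ?_)
    simp only [norm_mul, Real.norm_eq_abs, abs_exp, exp_add]
    have := hC (a * (exp b * exp (σ * w)))
    have : 0 ≤ |a| * (exp b * exp (σ * w) * |σ|) := by positivity
    nlinarith
  have stein := integral_mul_sub_gaussianReal hv hderiv hg hgw hg'
  simp only [sub_zero] at stein
  rw [stein, ← integral_const_mul, ← integral_const_mul]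
  congr 1; ext w; ring

end Gaussian

section Independence

variable {Ω : Type*} [MeasurableSpace Ω] {μ : Measure Ω}

lemma ProbabilityTheory.IndepFun.integral_comp_prod_eq_integral_integral [IsFiniteMeasure μ]
    {α β E : Type*} [MeasurableSpace α] [MeasurableSpace β] [NormedAddCommGroup E]
    [NormedSpace ℝ E] {X : Ω → α} {Y : Ω → β} (hXY : IndepFun X Y μ) (hX : Measurable X)
    (hY : Measurable Y) {f : α × β → E} (hf : Integrable f ((μ.map X).prod (μ.map Y))) :
    ∫ ω, f (X ω, Y ω) ∂μ = ∫ y, ∫ x, f (x, y) ∂μ.map X ∂μ.map Y := by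
  have hmap : μ.map (fun ω => (X ω, Y ω)) = (μ.map X).prod (μ.map Y) :=
    (indepFun_iff_map_prod_eq_prod_map_map hX.aemeasurable hY.aemeasurable).mp hXY
  rw [← integral_prod_symm f hf, ← hmap, integral_map (hX.prodMk hY).aemeasurable]
  rw [hmap]; exact hf.1

lemma ProbabilityTheory.IndepFun.integrable_exp_left_of_integrable_exp_add [NeZero μ]
    {X Y : Ω → ℝ} (hXY : IndepFun X Y μ) (hX : Measurable X) (hY : Measurable Y)
    (h : Integrable (fun ω => exp (X ω + Y ω)) μ) :
    Integrable (fun ω => exp (X ω)) μ := by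
  refine (hXY.comp measurable_exp measurable_exp).integrable_left_of_integrable_op
    (· * ·) 1 one_ne_zero (fun a b => by simp [enorm_mul]) ?_ (by fun_prop) (by fun_prop) ?_
  · simpa [exp_add] using h
  · intro h0
    obtain ⟨ω, hω⟩ := h0.exists
    exact exp_ne_zero _ hω

lemma integral_comp_mul_exp_mul_of_indepFun [IsFiniteMeasure μ] {v : ℝ≥0} (hv : v ≠ 0)
    {W J : Ω → ℝ} (hW : μ.map W = gaussianReal 0 v) (hWJ : IndepFun W J μ)
    (hWm : Measurable W) (hJm : Measurable J) (hJ : Integrable (fun ω => exp (J ω)) μ)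
    {Φ : ℝ → ℝ} (hΦ : Differentiable ℝ Φ) {C : ℝ} (hC : ∀ y, |deriv Φ y| ≤ C) (a σ : ℝ) :
    ∫ ω, Φ (a * exp (J ω + σ * W ω)) * W ω ∂μ
      = v * (a * σ) * ∫ ω, deriv Φ (a * exp (J ω + σ * W ω)) * exp (J ω + σ * W ω) ∂μ := by
  have hΦc := hΦ.continuous
  have hJ' : Integrable exp (μ.map J) :=
    (integrable_map_measure (by fun_prop) hJm.aemeasurable).2 hJ
  have hΦ_le (z : ℝ × ℝ) : |Φ (a * exp (z.2 + σ * z.1))|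
      ≤ |Φ 0| + C * |a| * exp (σ * z.1) * exp z.2 := by
    refine (abs_le_abs_apply_zero_add_of_abs_deriv_le hΦ hC _).trans_eq ?_
    rw [abs_mul, abs_exp, exp_add]; ring
  have hint_lhs : Integrable (fun z : ℝ × ℝ => Φ (a * exp (z.2 + σ * z.1)) * z.1)
      ((μ.map W).prod (μ.map J)) := by
    rw [hW]
    refine ((((integrable_abs_mul_exp_mul_gaussianReal 0).const_mul |Φ 0|).mul_prod
      (integrable_const 1)).add (((integrable_abs_mul_exp_mul_gaussianReal σ).const_mul
      (C * |a|)).mul_prod hJ')).mono' (by fun_prop) (ae_of_all _ fun z => ?_)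
    simp only [norm_mul, Real.norm_eq_abs, zero_mul, exp_zero, Pi.add_apply]
    nlinarith [hΦ_le z, abs_nonneg z.1]
  have hint_rhs : Integrable
      (fun z : ℝ × ℝ => deriv Φ (a * exp (z.2 + σ * z.1)) * exp (z.2 + σ * z.1))
      ((μ.map W).prod (μ.map J)) := by
    rw [hW]
    refine (((integrable_exp_mul_gaussianReal σ).const_mul C).mul_prod hJ').mono'
      (((measurable_deriv Φ).comp (by fun_prop)).aestronglyMeasurable.mul (by fun_prop))
      (ae_of_all _ fun z => ?_)
    simp only [norm_mul, Real.norm_eq_abs, abs_exp]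
    have := hC (a * exp (z.2 + σ * z.1))
    rw [exp_add] at *
    nlinarith [mul_pos (exp_pos z.2) (exp_pos (σ * z.1))]
  calc ∫ ω, Φ (a * exp (J ω + σ * W ω)) * W ω ∂μ
      = ∫ j, ∫ w, Φ (a * exp (j + σ * w)) * w ∂gaussianReal 0 v ∂μ.map J := by
        rw [← hW]; exact hWJ.integral_comp_prod_eq_integral_integral hWm hJm hint_lhs
    _ = ∫ j, v * (a * σ) * ∫ w, deriv Φ (a * exp (j + σ * w)) * exp (j + σ * w)
          ∂gaussianReal 0 v ∂μ.map J := by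
        simp_rw [integral_comp_mul_exp_mul_id_gaussianReal hv hΦ hC]
    _ = v * (a * σ) * ∫ ω, deriv Φ (a * exp (J ω + σ * W ω)) * exp (J ω + σ * W ω) ∂μ := by
        rw [integral_const_mul, ← hW]
        exact congrArg _ (hWJ.integral_comp_prod_eq_integral_integral hWm hJm hint_rhs).symm

end Independence

/-- European Delta formula: in the exponential Lévy model `X_T = x exp(X̃_T)` with
`X̃_T = γT + σW_T + X_T^J`, `W_T` Gaussian `N(0,T)` independent of the jump part, for
every `Φ ∈ C¹(ℝ)` with bounded derivative,
`∂/∂x E[e^{−rT} Φ(X_T)] = (e^{−rT}/(xσT)) E[Φ(X_T) W_T]`. -/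
theorem european_delta
    {Ω : Type*} [MeasurableSpace Ω] (μ : Measure Ω) [IsProbabilityMeasure μ]
    (T r γ σ x : ℝ) (hT : 0 < T) (hσ : σ ≠ 0) (hx : 0 < x)
    (WT : Ω → ℝ) (XJ : Ω → ℝ) (Xtilde : Ω → ℝ)
    (hdecomp : ∀ ω, Xtilde ω = γ * T + σ * WT ω + XJ ω)
    (hWmeas : Measurable WT) (hJmeas : Measurable XJ)
    (hW : Measure.map WT μ = gaussianReal 0 (Real.toNNReal T))
    (hindep : IndepFun WT XJ μ)
    (hL2 : MemLp (fun ω => Real.exp (Xtilde ω)) 2 μ)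
    (Φ : ℝ → ℝ) (hΦ : ContDiff ℝ 1 Φ) (hΦ' : ∃ C, ∀ y, |deriv Φ y| ≤ C) :
    deriv (fun y => ∫ ω, Real.exp (-(r * T)) * Φ (y * Real.exp (Xtilde ω)) ∂μ) x
      = Real.exp (-(r * T)) / (x * σ * T) *
          ∫ ω, Φ (x * Real.exp (Xtilde ω)) * WT ω ∂μ := by
  obtain ⟨C, hC⟩ := hΦ'
  have hΦd : Differentiable ℝ Φ := hΦ.differentiable one_ne_zero
  set J : Ω → ℝ := fun ω => γ * T + XJ ω
  have hJm : Measurable J := hJmeas.const_add _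
  have hWJ : IndepFun WT J μ := hindep.comp measurable_id (measurable_const_add _)
  have hXtilde : Xtilde = fun ω => J ω + σ * WT ω := by ext ω; rw [hdecomp]; ring
  have hexp : Integrable (fun ω => exp (Xtilde ω)) μ := hL2.integrable one_le_two
  have hJ : Integrable (fun ω => exp (J ω)) μ := by
    rw [hXtilde] at hexp
    exact (hWJ.symm.comp measurable_id (measurable_const_mul σ))
      |>.integrable_exp_left_of_integrable_exp_add hJm (hWmeas.const_mul σ) hexp
  have hIBP := integral_comp_mul_exp_mul_of_indepFun (by simpa using hT) hW hWJ hWmeas hJm hJ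
    hΦd hC x σ
  simp_rw [integral_const_mul]
  rw [((hasDerivAt_integral_comp_mul hexp hΦd hC x).const_mul _).deriv, hXtilde, hIBP,
    Real.coe_toNNReal _ hT.le]
  field_simp
end

section
/- European Alpha formula: With X_T = x exp(γT + σW_T + Σ_{i=1}^{N_T} αYᵢ + X_T^{(3)}), for Φ ∈ C¹(ℝ) with bounded derivative, ∂/∂α E[Φ(X_T)] = (1/(σT)) E[Φ(X_T) W_T Σ_{i=1}^{N_T} Yᵢ]. -/
/-!
Differentiating under the integral sign, with the dominating function `|S|` times the `L²`
exponentials at `α ± 1`, gives `∂/∂α E[Φ(X_T)] = E[Φ'(X_T) X_T S]`. Since `W_T ~ N(0, T)` is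
independent of `(S, M)`, Stein's identity `E[f(W) W] = T E[f'(W)]`, applied fibrewise over
`(S, M)` to `f(w) = Φ(x exp(γT + σw + αS + M)) S`, gives `E[Φ(X_T) W_T S] = σT E[Φ'(X_T) X_T S]`.
This is the Malliavin duality `E[F δ(u)] = E[⟨DF, u⟩]` for `u = S 1_{[0,T]}`, `D_s X_T = σ X_T`.
-/

open MeasureTheory ProbabilityTheory Real
open scoped NNReal

namespace ProbabilityTheory

lemma hasDerivAt_gaussianPDFReal (m : ℝ) (v : ℝ≥0) (w : ℝ) :
    HasDerivAt (gaussianPDFReal m v) (-((w - m) / v) * gaussianPDFReal m v w) w := by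
  have hq : HasDerivAt (fun y : ℝ => -(y - m) ^ 2 / (2 * v)) (-((w - m) / v)) w :=
    (((hasDerivAt_id' w).sub_const m).fun_pow 2).fun_neg.div_const (2 * (v : ℝ)) |>.congr_deriv
      (by norm_num; ring)
  rw [gaussianPDFReal_def]
  exact (hq.exp.const_mul _).congr_deriv (by ring)

lemma integrable_gaussianReal_iff {m : ℝ} {v : ℝ≥0} (hv : v ≠ 0) {f : ℝ → ℝ} :
    Integrable f (gaussianReal m v) ↔ Integrable (fun w => gaussianPDFReal m v w * f w) := by
  rw [gaussianReal_of_var_ne_zero _ hv, integrable_withDensity_iff_integrable_smul'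
    (measurable_gaussianPDF m v) (ae_of_all _ fun _ => gaussianPDF_lt_top)]
  simp only [toReal_gaussianPDF, smul_eq_mul]

theorem integral_mul_sub_gaussianReal {m : ℝ} {v : ℝ≥0} {f f' : ℝ → ℝ}
    (hf : ∀ w, HasDerivAt f (f' w) w) (hfi : Integrable f (gaussianReal m v))
    (hfw : Integrable (fun w => f w * (w - m)) (gaussianReal m v))
    (hf'i : Integrable f' (gaussianReal m v)) :
    ∫ w, f w * (w - m) ∂gaussianReal m v = v * ∫ w, f' w ∂gaussianReal m v := by
  rcases eq_or_ne v 0 with rfl | hv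
  · simp [gaussianReal_zero_var]
  rw [integrable_gaussianReal_iff hv] at hfi hfw hf'i
  have hv' : (v : ℝ) ≠ 0 := NNReal.coe_ne_zero.mpr hv
  set p := gaussianPDFReal m v
  have hderiv : ∀ w, HasDerivAt (fun w => p w * f w)
      (p w * f' w - (p w * (f w * (w - m))) / v) w := fun w =>
    ((hasDerivAt_gaussianPDFReal m v w).mul (hf w)).congr_deriv (by ring)
  have hzero := integral_eq_zero_of_hasDerivAt_of_integrable hderiv
    (hf'i.sub (hfw.div_const _)) hfi
  rw [integral_sub hf'i (hfw.div_const _), integral_div, sub_eq_zero] at hzero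
  simp only [integral_gaussianReal_eq_integral_smul hv, smul_eq_mul]
  rw [hzero, mul_div_cancel₀ _ hv']

lemma integrable_exp_mul_mul_gaussianReal (m : ℝ) (v : ℝ≥0) (c : ℝ) :
    Integrable (fun w => exp (c * w) * w) (gaussianReal m v) := by
  have hexp : MemLp (fun w => exp (c * w)) 2 (gaussianReal m v) := by
    refine (memLp_two_iff_integrable_sq (by fun_prop)).2 ?_
    simpa only [← exp_nat_mul, Nat.cast_ofNat, mul_assoc] using
      integrable_exp_mul_gaussianReal (2 * c)
  exact hexp.integrable_mul (memLp_id_gaussianReal' 2 (by norm_num))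

variable {Ω : Type*} [MeasurableSpace Ω] {μ : Measure Ω}

theorem integral_mul_sub_eq_integral_deriv_of_indepFun [IsFiniteMeasure μ]
    {E : Type*} [MeasurableSpace E] {W : Ω → ℝ} {Y : Ω → E} {m : ℝ} {v : ℝ≥0}
    (hW : Measurable W) (hY : Measurable Y) (hlaw : μ.map W = gaussianReal m v)
    (hind : IndepFun W Y μ) {F F' : ℝ → E → ℝ}
    (hFm : Measurable (Function.uncurry F)) (hF'm : Measurable (Function.uncurry F'))
    (hF : ∀ y w, HasDerivAt (F · y) (F' w y) w)
    (hFi : Integrable (fun ω => F (W ω) (Y ω)) μ)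
    (hFWi : Integrable (fun ω => F (W ω) (Y ω) * (W ω - m)) μ)
    (hF'i : Integrable (fun ω => F' (W ω) (Y ω)) μ) :
    ∫ ω, F (W ω) (Y ω) * (W ω - m) ∂μ = v * ∫ ω, F' (W ω) (Y ω) ∂μ := by
  have hmap : μ.map (fun ω => (W ω, Y ω)) = (gaussianReal m v).prod (μ.map Y) := by
    rw [← hlaw]
    exact (indepFun_iff_map_prod_eq_prod_map_map hW.aemeasurable hY.aemeasurable).1 hind
  set ν := (gaussianReal m v).prod (μ.map Y)
  have hWY : AEMeasurable (fun ω => (W ω, Y ω)) μ := (hW.prodMk hY).aemeasurable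
  have htransfer {G : ℝ × E → ℝ} (hG : Measurable G) :
      (∫ ω, G (W ω, Y ω) ∂μ = ∫ p, G p ∂ν) ∧
        (Integrable (fun ω => G (W ω, Y ω)) μ → Integrable G ν) := by
    rw [← hmap]
    exact ⟨(integral_map hWY hG.aestronglyMeasurable).symm,
      (integrable_map_measure hG.aestronglyMeasurable hWY).2⟩
  have hFWm : Measurable fun p : ℝ × E => F p.1 p.2 * (p.1 - m) := by fun_prop
  replace hFi := (htransfer hFm).2 hFi
  replace hFWi := (htransfer hFWm).2 hFWi
  replace hF'i := (htransfer hF'm).2 hF'i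
  calc ∫ ω, F (W ω) (Y ω) * (W ω - m) ∂μ = ∫ p, F p.1 p.2 * (p.1 - m) ∂ν := (htransfer hFWm).1
    _ = ∫ y, ∫ w, F w y * (w - m) ∂gaussianReal m v ∂μ.map Y := integral_prod_symm _ hFWi
    _ = ∫ y, v * ∫ w, F' w y ∂gaussianReal m v ∂μ.map Y := by
      refine integral_congr_ae ?_
      filter_upwards [hFi.prod_left_ae, hFWi.prod_left_ae, hF'i.prod_left_ae] with y h1 h2 h3
      exact integral_mul_sub_gaussianReal (hF y) h1 h2 h3
    _ = v * ∫ p, Function.uncurry F' p ∂ν := by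
      rw [integral_const_mul, integral_prod_symm _ hF'i]; rfl
    _ = v * ∫ ω, F' (W ω) (Y ω) ∂μ := congrArg ((v : ℝ) * ·) (htransfer hF'm).1.symm

lemma IndepFun.memLp_two_right_of_mul {U V : Ω → ℝ} (hUV : IndepFun U V μ)
    (hU : AEStronglyMeasurable U μ) (hV : AEStronglyMeasurable V μ) (hU0 : ¬U =ᵐ[μ] 0)
    (hmul : MemLp (U * V) 2 μ) : MemLp V 2 μ := by
  rw [memLp_two_iff_integrable_sq hV]
  rw [memLp_two_iff_integrable_sq (hU.mul hV)] at hmul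
  have hsq : IndepFun (fun ω => U ω ^ 2) (fun ω => V ω ^ 2) μ :=
    hUV.comp (measurable_id.pow_const 2) (measurable_id.pow_const 2)
  refine hsq.integrable_right_of_integrable_op (· * ·) 1 one_ne_zero
    (fun a b => by simp [enorm_mul])
    (by simpa only [Pi.mul_apply, mul_pow] using hmul) (hU.pow 2) (hV.pow 2)
    fun h => hU0 (h.mono fun ω hω => by simpa using hω)

end ProbabilityTheory

section BoundedDerivative

variable {Φ : ℝ → ℝ} {C : ℝ}

lemma abs_le_abs_zero_add_mul_abs_of_abs_deriv_le (hΦ : Differentiable ℝ Φ)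
    (hC : ∀ y, |deriv Φ y| ≤ C) (y : ℝ) : |Φ y| ≤ |Φ 0| + C * |y| := by
  have h := Convex.norm_image_sub_le_of_norm_deriv_le (fun z _ => hΦ z)
    (fun z _ => (hC z : ‖deriv Φ z‖ ≤ C)) convex_univ (Set.mem_univ 0) (Set.mem_univ y)
  simp only [Real.norm_eq_abs, sub_zero] at h
  linarith [abs_sub_abs_le_abs_sub (Φ y) (Φ 0)]

lemma hasDerivAt_comp_mul_exp (hΦ : Differentiable ℝ Φ) (x : ℝ) {g : ℝ → ℝ} {g' t : ℝ}
    (hg : HasDerivAt g g' t) :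
    HasDerivAt (fun t => Φ (x * exp (g t))) (deriv Φ (x * exp (g t)) * (x * exp (g t)) * g') t :=
  ((hΦ _).hasDerivAt.comp t (hg.exp.const_mul x)).congr_deriv (by ring)

lemma exp_mul_add_le_add {a b c : ℝ} (hb : b ≤ a) (hc : a ≤ c) (s z : ℝ) :
    exp (a * s + z) ≤ exp (b * s + z) + exp (c * s + z) := by
  rcases le_total 0 s with hs | hs
  · linarith [exp_le_exp.2 (show a * s + z ≤ c * s + z by nlinarith), exp_pos (b * s + z)]
  · linarith [exp_le_exp.2 (show a * s + z ≤ b * s + z by nlinarith), exp_pos (c * s + z)]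

variable {Ω : Type*} [MeasurableSpace Ω] {μ : Measure Ω}

lemma integrable_comp_mul_of_abs_deriv_le (hΦ : Differentiable ℝ Φ)
    (hC : ∀ y, |deriv Φ y| ≤ C) {X G : Ω → ℝ} (hX : AEStronglyMeasurable X μ)
    (hG : Integrable G μ) (hXG : Integrable (fun ω => X ω * G ω) μ) :
    Integrable (fun ω => Φ (X ω) * G ω) μ := by
  refine ((hG.norm.const_mul |Φ 0|).add (hXG.norm.const_mul C)).mono'
    ((hΦ.continuous.comp_aestronglyMeasurable hX).mul hG.1) (ae_of_all _ fun ω => ?_)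
  simp only [Pi.add_apply, Real.norm_eq_abs, abs_mul]
  nlinarith [abs_le_abs_zero_add_mul_abs_of_abs_deriv_le hΦ hC (X ω), abs_nonneg (G ω)]

theorem hasDerivAt_integral_comp_mul_exp [IsFiniteMeasure μ] (hΦ : Differentiable ℝ Φ)
    (hC : ∀ y, |deriv Φ y| ≤ C) (x α : ℝ) {S Z : Ω → ℝ} (hS : MemLp S 2 μ)
    (hL2 : ∀ a, MemLp (fun ω => exp (a * S ω + Z ω)) 2 μ) :
    HasDerivAt (fun a => ∫ ω, Φ (x * exp (a * S ω + Z ω)) ∂μ)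
      (∫ ω, deriv Φ (x * exp (α * S ω + Z ω)) * (x * exp (α * S ω + Z ω)) * S ω ∂μ) α := by
  have hX (a : ℝ) : AEStronglyMeasurable (fun ω => x * exp (a * S ω + Z ω)) μ :=
    (hL2 a).1.const_mul x
  have hbound : Integrable (fun ω => |C * x| *
      ((exp ((α - 1) * S ω + Z ω) + exp ((α + 1) * S ω + Z ω)) * |S ω|)) μ :=
    (((hL2 (α - 1)).add (hL2 (α + 1))).integrable_mul hS.abs).const_mul _
  refine (hasDerivAt_integral_of_dominated_loc_of_deriv_le (Metric.ball_mem_nhds α one_pos)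
    (F' := fun a ω => deriv Φ (x * exp (a * S ω + Z ω)) * (x * exp (a * S ω + Z ω)) * S ω)
    (.of_forall fun a => (hΦ.continuous.comp_aestronglyMeasurable (hX a))) ?_ ?_ ?_ hbound
    (ae_of_all _ fun ω a _ => ?_)).2
  · simpa using integrable_comp_mul_of_abs_deriv_le hΦ hC (hX α) (integrable_const 1)
      (by simpa using ((hL2 α).integrable one_le_two).const_mul x)
  · exact (((measurable_deriv Φ).comp_aemeasurable (hX α).aemeasurable).aestronglyMeasurable.mul
      (hX α)).mul hS.1
  · refine ae_of_all _ fun ω a ha => ?_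
    rw [Metric.mem_ball, Real.dist_eq, abs_lt] at ha
    have hE := exp_mul_add_le_add (by linarith : α - 1 ≤ a) (by linarith : a ≤ α + 1) (S ω) (Z ω)
    simp only [Real.norm_eq_abs, abs_mul, abs_exp]
    calc _ ≤ |C| * (|x| * (exp ((α - 1) * S ω + Z ω) + exp ((α + 1) * S ω + Z ω))) * |S ω| := by
          gcongr ?_ * (_ * ?_) * _
          exact (hC _).trans (le_abs_self C)
      _ = _ := by ring
  · simpa using hasDerivAt_comp_mul_exp hΦ x (((hasDerivAt_id a).mul_const (S ω)).add_const (Z ω))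

section GaussianModel

variable [IsProbabilityMeasure μ] {W S V : Ω → ℝ} {v : ℝ≥0}

lemma integrable_exp_mul_add_mul_mul_of_indepFun (σ : ℝ) (hW : Measurable W) (hV : Measurable V)
    (hlaw : μ.map W = gaussianReal 0 v)
    (hind : IndepFun W (fun ω => (S ω, V ω)) μ)
    (hXL2 : MemLp (fun ω => exp (σ * W ω + V ω)) 2 μ) (hSL2 : MemLp S 2 μ) :
    Integrable (fun ω => exp (σ * W ω + V ω) * (S ω * W ω)) μ := by
  have hVL2 : MemLp (fun ω => exp (V ω)) 2 μ := by
    refine (hind.comp (φ := fun w => exp (σ * w)) (ψ := fun p => exp p.2) (by fun_prop)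
      (by fun_prop)).memLp_two_right_of_mul (by fun_prop) (by fun_prop) ?_ ?_
    · intro h
      obtain ⟨ω, hω⟩ := h.exists
      exact exp_ne_zero _ hω
    · convert hXL2 using 1
      funext ω
      simp only [Pi.mul_apply, Function.comp_apply, ← exp_add]
  have hW' : Integrable (fun ω => exp (σ * W ω) * W ω) μ :=
    (integrable_map_measure (g := fun w => exp (σ * w) * w) (by fun_prop) hW.aemeasurable).1
      (hlaw ▸ integrable_exp_mul_mul_gaussianReal 0 v σ)
  have hind' := hind.comp (φ := fun w => exp (σ * w) * w) (ψ := fun p => exp p.2 * p.1)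
    (by fun_prop) (by fun_prop)
  refine (hind'.integrable_mul hW' (hVL2.integrable_mul hSL2)).congr (ae_of_all _ fun ω => ?_)
  simp only [Pi.mul_apply, Function.comp_apply, exp_add]
  ring

theorem integral_comp_mul_exp_mul_mul_eq (hΦ : Differentiable ℝ Φ)
    (hC : ∀ y, |deriv Φ y| ≤ C) (x σ : ℝ)
    (hW : Measurable W) (hS : Measurable S) (hV : Measurable V)
    (hlaw : μ.map W = gaussianReal 0 v) (hind : IndepFun W (fun ω => (S ω, V ω)) μ)
    (hXL2 : MemLp (fun ω => exp (σ * W ω + V ω)) 2 μ) (hSL2 : MemLp S 2 μ) :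
    ∫ ω, Φ (x * exp (σ * W ω + V ω)) * W ω * S ω ∂μ
      = σ * v * ∫ ω, deriv Φ (x * exp (σ * W ω + V ω)) * (x * exp (σ * W ω + V ω)) * S ω ∂μ := by
  have hΦm : Measurable Φ := hΦ.continuous.measurable
  have hX : AEStronglyMeasurable (fun ω => x * exp (σ * W ω + V ω)) μ := hXL2.1.const_mul x
  have hXS : Integrable (fun ω => x * exp (σ * W ω + V ω) * S ω) μ := by
    simpa only [Pi.mul_apply, mul_assoc] using (hXL2.integrable_mul hSL2).const_mul x
  have hWL2 : MemLp W 2 μ := (memLp_map_measure_iff aestronglyMeasurable_id hW.aemeasurable).1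
    (hlaw ▸ memLp_id_gaussianReal' 2 (by norm_num))
  have hXSW : Integrable (fun ω => x * exp (σ * W ω + V ω) * (S ω * W ω)) μ := by
    simpa only [mul_assoc] using
      (integrable_exp_mul_add_mul_mul_of_indepFun σ hW hV hlaw hind hXL2 hSL2).const_mul x
  have hibp := integral_mul_sub_eq_integral_deriv_of_indepFun hW (hS.prodMk hV) hlaw hind
    (F := fun w y => Φ (x * exp (σ * w + y.2)) * y.1)
    (F' := fun w y => σ * (deriv Φ (x * exp (σ * w + y.2)) * (x * exp (σ * w + y.2)) * y.1))
    (by fun_prop) (by fun_prop)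
    (fun y w => ((hasDerivAt_comp_mul_exp hΦ x
      (((hasDerivAt_id' w).const_mul σ).add_const y.2)).mul_const y.1).congr_deriv (by ring))
    (integrable_comp_mul_of_abs_deriv_le hΦ hC hX (hSL2.integrable one_le_two) hXS)
    (by simpa only [sub_zero, Pi.mul_apply, mul_assoc] using
      integrable_comp_mul_of_abs_deriv_le hΦ hC hX (hSL2.integrable_mul hWL2) hXSW)
    (by simpa only [Function.comp_apply, mul_assoc] using
      (hXS.bdd_mul ((measurable_deriv Φ).comp_aemeasurable hX.aemeasurable).aestronglyMeasurable
        (ae_of_all _ fun ω => hC _)).const_mul σ)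
  simp only [sub_zero, integral_const_mul] at hibp
  simp_rw [mul_right_comm _ (W _) (S _), hibp]
  ring

end GaussianModel

end BoundedDerivative

theorem european_alpha_general
    {Ω : Type*} [MeasurableSpace Ω] (μ : Measure Ω) [IsProbabilityMeasure μ]
    (T γ σ x α : ℝ) (hT : 0 < T) (hσ : σ ≠ 0)
    (WT : Ω → ℝ) (S : Ω → ℝ) (M : Ω → ℝ)
    (hWmeas : Measurable WT) (hSmeas : Measurable S) (hMmeas : Measurable M)
    (hW : Measure.map WT μ = gaussianReal 0 (Real.toNNReal T))
    (hindep : IndepFun WT (fun ω => (S ω, M ω)) μ)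
    (hL2 : ∀ a : ℝ, MemLp (fun ω => Real.exp (γ * T + σ * WT ω + a * S ω + M ω)) 2 μ)
    (hSL2 : MemLp S 2 μ)
    (Φ : ℝ → ℝ) (hΦ : ContDiff ℝ 1 Φ) (hΦ' : ∃ C, ∀ y, |deriv Φ y| ≤ C) :
    deriv (fun a => ∫ ω, Φ (x * Real.exp (γ * T + σ * WT ω + a * S ω + M ω)) ∂μ) α
      = 1 / (σ * T) *
          ∫ ω, Φ (x * Real.exp (γ * T + σ * WT ω + α * S ω + M ω)) * WT ω * S ω ∂μ := by
  obtain ⟨C, hC⟩ := hΦ'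
  have hΦd : Differentiable ℝ Φ := hΦ.differentiable one_ne_zero
  have hZ (a : ℝ) (ω : Ω) :
      a * S ω + (γ * T + σ * WT ω + M ω) = γ * T + σ * WT ω + a * S ω + M ω := by ring
  have hV (ω : Ω) :
      σ * WT ω + (γ * T + α * S ω + M ω) = γ * T + σ * WT ω + α * S ω + M ω := by ring
  have hder := hasDerivAt_integral_comp_mul_exp hΦd hC x α hSL2
    (Z := fun ω => γ * T + σ * WT ω + M ω) (fun a => by simpa only [hZ] using hL2 a)
  have hibp := integral_comp_mul_exp_mul_mul_eq hΦd hC x σ hWmeas hSmeas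
    (V := fun ω => γ * T + α * S ω + M ω) (by fun_prop) hW
    (hindep.comp (ψ := fun p : ℝ × ℝ => (p.1, γ * T + α * p.1 + p.2)) measurable_id (by fun_prop))
    (by simpa only [hV] using hL2 α) hSL2
  simp only [hZ] at hder
  simp only [hV] at hibp
  rw [hder.deriv, hibp, Real.coe_toNNReal T hT.le]
  field_simp

/-- European Alpha formula: with
`X_T = x exp(γT + σW_T + α Σ_{i=1}^{N_T} Yᵢ + X_T^{(3)})`, where `S = Σ_{i=1}^{N_T} Yᵢ`
is the (normalized) compound Poisson part and `M = X_T^{(3)}` the pure jump martingale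
part, both independent of the Gaussian `W_T`, for `Φ ∈ C¹(ℝ)` with bounded derivative,
`∂/∂α E[Φ(X_T)] = (1/(σT)) E[Φ(X_T) W_T Σ_{i=1}^{N_T} Yᵢ]`. -/
theorem european_alpha
    {Ω : Type*} [MeasurableSpace Ω] (μ : Measure Ω) [IsProbabilityMeasure μ]
    (T γ σ x α : ℝ) (hT : 0 < T) (hσ : σ ≠ 0) (hx : 0 < x)
    (WT : Ω → ℝ) (S : Ω → ℝ) (M : Ω → ℝ)
    (hWmeas : Measurable WT) (hSmeas : Measurable S) (hMmeas : Measurable M)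
    (hW : Measure.map WT μ = gaussianReal 0 (Real.toNNReal T))
    (hindep : IndepFun WT (fun ω => (S ω, M ω)) μ)
    (hL2 : ∀ a : ℝ, MemLp (fun ω => Real.exp (γ * T + σ * WT ω + a * S ω + M ω)) 2 μ)
    (hSL2 : MemLp S 2 μ)
    (Φ : ℝ → ℝ) (hΦ : ContDiff ℝ 1 Φ) (hΦ' : ∃ C, ∀ y, |deriv Φ y| ≤ C) :
    deriv (fun a => ∫ ω, Φ (x * Real.exp (γ * T + σ * WT ω + a * S ω + M ω)) ∂μ) α
      = 1 / (σ * T) *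
          ∫ ω, Φ (x * Real.exp (γ * T + σ * WT ω + α * S ω + M ω)) * WT ω * S ω ∂μ :=
  european_alpha_general μ T γ σ x α hT hσ WT S M hWmeas hSmeas hMmeas hW hindep hL2 hSL2 Φ hΦ hΦ'
end

section
/- Closed-form Skorohod integral for Asian Delta: δ(I_{(0)}/I_{(1)} · 1_{[0,T]}) = (I_{(0)}/I_{(1)}) W_T − σ + σ I_{(0)} I_{(2)}/I_{(1)}², where I_{(n)} = ∫₀ᵀ tⁿ X_t dt. -/
open MeasureTheory

/-- Closed-form Skorohod integral for Asian Delta: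
`δ(I_{(0)}/I_{(1)} · 1_{[0,T]}) = (I_{(0)}/I_{(1)}) W_T − σ + σ I_{(0)} I_{(2)}/I_{(1)}²`,
where `I_{(n)} = ∫₀ᵀ tⁿ X_t dt`. -/
theorem asian_delta_skorohod
    {Ω : Type*}
    (T σ : ℝ) (hT : 0 < T) (hσ : σ ≠ 0)
    (X : ℝ → Ω → ℝ) (WT : Ω → ℝ)
    (D : (Ω → ℝ) → ℝ → Ω → ℝ)
    (δ : (ℝ → Ω → ℝ) → Ω → ℝ)
    (I : ℕ → Ω → ℝ) (hI : ∀ n ω, I n ω = ∫ t in (0:ℝ)..T, t ^ n * X t ω)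
    (hI1 : ∀ ω, I 1 ω ≠ 0)
    -- δ(F u) = F δ(u) − ∫₀ᵀ D_t F u_t dt
    (hfact : ∀ (F : Ω → ℝ) (u : ℝ → Ω → ℝ),
      δ (fun s ω => F ω * u s ω)
        = fun ω => F ω * δ u ω - ∫ s in (0:ℝ)..T, D F s ω * u s ω)
    -- δ(1_{[0,T]}) = W_T
    (hδone : δ (fun s _ => Set.indicator (Set.Icc (0:ℝ) T) (fun _ => (1:ℝ)) s) = WT)
    -- ∫₀ᵀ D_s I_{(n)} ds = σ I_{(n+1)}
    (hDI : ∀ n ω, (∫ s in (0:ℝ)..T, D (I n) s ω) = σ * I (n + 1) ω)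
    -- quotient rule for D
    (hquot : ∀ F G : Ω → ℝ, D (fun ω => F ω / G ω)
      = fun s ω => (G ω * D F s ω - F ω * D G s ω) / (G ω) ^ 2) :
    δ (fun s ω => (I 0 ω / I 1 ω) * Set.indicator (Set.Icc (0:ℝ) T) (fun _ => (1:ℝ)) s)
      = fun ω => (I 0 ω / I 1 ω) * WT ω - σ + σ * I 0 ω * I 2 ω / (I 1 ω) ^ 2 := by
  set ind : ℝ → ℝ := Set.indicator (Set.Icc (0:ℝ) T) (fun _ => (1:ℝ)) with hind
  -- D of the constant function 1 is 0
  have hD1 : D (fun _ => (1:ℝ)) = fun _ _ => 0 := by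
    have h := hquot (fun _ => 1) (fun _ => 1)
    rw [show (fun _ : Ω => (1:ℝ)/1) = fun _ => (1:ℝ) by funext; norm_num] at h
    funext s ω
    have h2 := congrFun (congrFun h s) ω
    simpa using h2
  -- D of 1 / I 1
  have hDinv : D (fun ω => 1 / I 1 ω)
      = fun s ω => (I 1 ω * 0 - 1 * D (I 1) s ω) / (I 1 ω) ^ 2 := by
    have h := hquot (fun _ => 1) (I 1)
    simp only [hD1] at h
    exact h
  have hindEq : ∀ s ∈ Set.uIcc (0:ℝ) T, ind s = 1 := by
    intro s hs
    rw [Set.uIcc_of_le hT.le] at hs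
    simp [hind, Set.indicator_of_mem hs]
  have harg : (fun s ω => (I 0 ω / I 1 ω) * ind s)
      = fun s ω => I 0 ω * ((1 / I 1 ω) * ind s) := by
    funext s ω; ring
  have key := hfact (I 0) (fun s ω => (1 / I 1 ω) * ind s)
  have inner := hfact (fun ω => 1 / I 1 ω) (fun s _ => ind s)
  funext ω
  rw [harg]
  simp only [key, inner, hδone, hDinv]
  have hInt1 : (∫ s in (0:ℝ)..T, D (I 0) s ω * (1 / I 1 ω * ind s))
      = 1 / I 1 ω * (σ * I 1 ω) := by
    rw [intervalIntegral.integral_congr (g := fun s => 1 / I 1 ω * D (I 0) s ω)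
      (fun s hs => by rw [hindEq s hs]; ring)]
    rw [intervalIntegral.integral_const_mul, hDI 0 ω]
  have hInt2 : (∫ s in (0:ℝ)..T, (I 1 ω * 0 - 1 * D (I 1) s ω) / (I 1 ω) ^ 2 * ind s)
      = (-(σ * I 2 ω)) / (I 1 ω) ^ 2 := by
    rw [intervalIntegral.integral_congr (g := fun s => (-(D (I 1) s ω)) / (I 1 ω) ^ 2)
      (fun s hs => by rw [hindEq s hs]; ring)]
    rw [intervalIntegral.integral_div, intervalIntegral.integral_neg, hDI 1 ω]
  rw [hInt1, hInt2]
  have h1 := hI1 ω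
  field_simp
  ring
end

section
/- Skorohod integral identity for Asian Vega: δ(1_{[0,T]} (∫₀ᵀ X_t W_t dt)/I_{(1)}) = (∫₀ᵀ X_t W_t dt / I_{(1)}) W_T − σ(∫₀ᵀ t X_t W_t dt)/I_{(1)} − 1 + σ(∫₀ᵀ X_t W_t dt) I_{(2)}/I_{(1)}². -/
/-!
Apply `δ(F u) = F δ(u) − ∫₀ᵀ D_s F u_s ds` to `F = A / I₁`, `A = ∫₀ᵀ X_t W_t dt`,
`u = 1_{[0,T]}`. Comparing `δ((F G) u)` with `δ(F (G u))` gives the Leibniz rule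
`∫₀ᵀ D(F G) = F ∫₀ᵀ D G + G ∫₀ᵀ D F`; with `F = A / I₁`, `G = I₁` and `∫₀ᵀ D I₁ = σ I₂` everything
reduces to `∫₀ᵀ D_s A ds = σ ∫₀ᵀ t X_t W_t dt + I₁`, which is Fubini on the triangle
`0 < s < t ≤ T` when `t X_t W_t` is integrable. Otherwise `A = 0` by the convention for
non-integrable functions, the quotient rule forces `D A = 0` where `A` vanishes, so
`σ ∫ₛᵀ X W + ∫ₛᵀ X ≡ 0`; Lebesgue differentiation turns this into `σ X W + X = 0` a.e. on `(0, T]`,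
and both sides of the reduced identity vanish.
-/

open MeasureTheory Set

theorem ae_restrict_Ioc_eq_zero_of_integral_tail_eq_zero {E : Type*} [NormedAddCommGroup E]
    [NormedSpace ℝ E] [CompleteSpace E] {f : ℝ → E} {a b c : ℝ} (hbc : b ≤ c)
    (hf : IntervalIntegrable f volume a c) (h : ∀ x ∈ Ioo a b, ∫ t in x..c, f t = 0) :
    ∀ᵐ x ∂volume.restrict (Ioc a b), f x = 0 := by
  have hne_b : ∀ᵐ x : ℝ, x ≠ b := by simp [ae_iff, measure_singleton]
  rw [ae_restrict_iff' measurableSet_Ioc]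
  filter_upwards [hf.ae_hasDerivAt_integral, hne_b] with x hderiv hxb hx
  have hxIoo : x ∈ Ioo a b := ⟨hx.1, lt_of_le_of_ne hx.2 hxb⟩
  have hconst : (fun y => ∫ t in c..y, f t) =ᶠ[nhds x] fun _ => 0 :=
    Filter.eventually_of_mem (Ioo_mem_nhds hxIoo.1 hxIoo.2) fun y hy => by
      beta_reduce
      rw [intervalIntegral.integral_symm, h y hy, neg_zero]
  have hxac : x ∈ uIcc a c := Icc_subset_uIcc ⟨hx.1.le, hx.2.trans hbc⟩
  exact (hderiv hxac c right_mem_uIcc).unique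
    ((hasDerivAt_const x 0).congr_of_eventuallyEq hconst)

theorem ae_restrict_Ioc_of_forall_Ioo {p : ℝ → Prop} {a b : ℝ}
    (h : ∀ u ∈ Ioo a b, ∀ᵐ x ∂volume.restrict (Ioc u b), p x) :
    ∀ᵐ x ∂volume.restrict (Ioc a b), p x := by
  have hcover : Ioc a b = ⋃ q : {q : ℚ // (q : ℝ) ∈ Ioo a b}, Ioc (q : ℝ) b := by
    ext x
    simp only [mem_iUnion, mem_Ioc, Subtype.exists, mem_Ioo, exists_prop]
    constructor
    · rintro ⟨hax, hxb⟩
      obtain ⟨q, haq, hqx⟩ := exists_rat_btwn hax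
      exact ⟨q, ⟨haq, hqx.trans_le hxb⟩, hqx, hxb⟩
    · rintro ⟨q, ⟨haq, -⟩, hqx, hxb⟩
      exact ⟨haq.trans hqx, hxb⟩
  rw [hcover, ae_restrict_iUnion_iff]
  exact fun q => h q q.2

theorem integrableOn_Ioc_of_integrableOn_mul_id {f : ℝ → ℝ} {s T : ℝ}
    (hf : IntegrableOn (fun t => t * f t) (Ioc 0 T)) (hs : 0 < s) :
    IntegrableOn f (Ioc s T) := by
  have hsub : IntegrableOn (fun t => t * f t) (Ioc s T) :=
    hf.mono_set (Ioc_subset_Ioc_left hs.le)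
  refine IntegrableOn.congr_fun
    (hsub.bdd_mul (c := s⁻¹) measurable_inv.aestronglyMeasurable ?_)
    (fun t ht => ?_) measurableSet_Ioc
  · filter_upwards [ae_restrict_mem measurableSet_Ioc] with t ht
    rw [Real.norm_eq_abs, abs_inv, abs_of_pos (hs.trans ht.1)]
    exact inv_anti₀ hs ht.1.le
  · field_simp [(hs.trans ht.1).ne']

section TriangleFubini

variable {f : ℝ → ℝ} {T : ℝ}

theorem measureReal_restrict_Ioc_Iio {t : ℝ} (ht : t ∈ Ioc 0 T) :
    (volume.restrict (Ioc 0 T)).real (Iio t) = t := by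
  have : Iio t ∩ Ioc 0 T = Ioo 0 t := by
    ext x; simp only [mem_inter_iff, mem_Iio, mem_Ioc, mem_Ioo]; grind
  rw [measureReal_restrict_apply measurableSet_Iio, this, Real.volume_real_Ioo_of_le ht.1.le,
    sub_zero]

theorem integral_restrict_Ioc_indicator_Ioi {s : ℝ} (hs : 0 ≤ s) (hsT : s ≤ T) :
    ∫ t, (Ioi s).indicator f t ∂volume.restrict (Ioc 0 T) = ∫ t in s..T, f t := by
  have : Ioi s ∩ Ioc 0 T = Ioc s T := by
    ext x; simp only [mem_inter_iff, mem_Ioi, mem_Ioc]; grind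
  rw [integral_indicator measurableSet_Ioi, Measure.restrict_restrict measurableSet_Ioi, this,
    intervalIntegral.integral_of_le hsT]

theorem aestronglyMeasurable_of_integrableOn_mul_id
    (hf : IntegrableOn (fun t => t * f t) (Ioc 0 T)) :
    AEStronglyMeasurable f (volume.restrict (Ioc 0 T)) := by
  refine (measurable_inv.aestronglyMeasurable.mul hf.1).congr ?_
  filter_upwards [ae_restrict_mem measurableSet_Ioc] with t ht
  simp only [Pi.mul_apply]
  field_simp [ht.1.ne']

theorem indicator_lt_apply_eq_indicator_Iio (f : ℝ → ℝ) (s t : ℝ) :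
    {q : ℝ × ℝ | q.1 < q.2}.indicator (fun q => f q.2) (s, t)
      = (Iio t).indicator (fun _ => f t) s := by
  simp [indicator_apply]

theorem indicator_lt_apply_eq_indicator_Ioi (f : ℝ → ℝ) (s t : ℝ) :
    {q : ℝ × ℝ | q.1 < q.2}.indicator (fun q => f q.2) (s, t) = (Ioi s).indicator f t := by
  simp [indicator_apply]

theorem integrable_indicator_lt_prod (hf : IntegrableOn (fun t => t * f t) (Ioc 0 T)) :
    Integrable ({q : ℝ × ℝ | q.1 < q.2}.indicator fun q => f q.2)
      ((volume.restrict (Ioc 0 T)).prod (volume.restrict (Ioc 0 T))) := by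
  have hmeas : AEStronglyMeasurable ({q : ℝ × ℝ | q.1 < q.2}.indicator fun q => f q.2)
      ((volume.restrict (Ioc 0 T)).prod (volume.restrict (Ioc 0 T))) :=
    (aestronglyMeasurable_of_integrableOn_mul_id hf).comp_snd.indicator
      (measurableSet_lt measurable_fst measurable_snd)
  refine (integrable_prod_iff' hmeas).2 ⟨ae_of_all _ fun t => ?_, ?_⟩
  · simp only [indicator_lt_apply_eq_indicator_Iio]
    exact (integrable_const _).indicator measurableSet_Iio
  · refine hf.norm.congr ?_
    filter_upwards [ae_restrict_mem measurableSet_Ioc] with t ht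
    simp only [indicator_lt_apply_eq_indicator_Iio, norm_indicator_eq_indicator_norm]
    rw [integral_indicator measurableSet_Iio, setIntegral_const, measureReal_restrict_Ioc_Iio ht,
      smul_eq_mul, norm_mul, Real.norm_of_nonneg ht.1.le]

theorem intervalIntegrable_integral_tail (hT : 0 ≤ T)
    (hf : IntegrableOn (fun t => t * f t) (Ioc 0 T)) :
    IntervalIntegrable (fun s => ∫ t in s..T, f t) volume 0 T := by
  rw [intervalIntegrable_iff_integrableOn_Ioc_of_le hT]
  refine (integrable_indicator_lt_prod hf).integral_prod_left.congr ?_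
  filter_upwards [ae_restrict_mem measurableSet_Ioc] with s hs
  simp only [indicator_lt_apply_eq_indicator_Ioi]
  exact integral_restrict_Ioc_indicator_Ioi hs.1.le hs.2

theorem integral_integral_tail (hT : 0 ≤ T) (hf : IntegrableOn (fun t => t * f t) (Ioc 0 T)) :
    ∫ s in 0..T, ∫ t in s..T, f t = ∫ t in 0..T, t * f t := by
  set ν := volume.restrict (Ioc (0 : ℝ) T)
  set Φ : ℝ × ℝ → ℝ := {q : ℝ × ℝ | q.1 < q.2}.indicator fun q => f q.2
  rw [intervalIntegral.integral_of_le hT, intervalIntegral.integral_of_le hT]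
  calc ∫ s in Ioc 0 T, ∫ t in s..T, f t
      = ∫ s, ∫ t, Φ (s, t) ∂ν ∂ν := by
        refine integral_congr_ae ?_
        filter_upwards [ae_restrict_mem measurableSet_Ioc] with s hs
        simp only [Φ, indicator_lt_apply_eq_indicator_Ioi]
        exact (integral_restrict_Ioc_indicator_Ioi hs.1.le hs.2).symm
    _ = ∫ t, ∫ s, Φ (s, t) ∂ν ∂ν :=
        integral_integral_swap (f := fun s t => Φ (s, t)) (integrable_indicator_lt_prod hf)
    _ = ∫ t in Ioc 0 T, t * f t := by
        refine integral_congr_ae ?_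
        filter_upwards [ae_restrict_mem measurableSet_Ioc] with t ht
        simp only [Φ, indicator_lt_apply_eq_indicator_Iio]
        rw [integral_indicator measurableSet_Iio, setIntegral_const,
          measureReal_restrict_Ioc_Iio ht, smul_eq_mul]

end TriangleFubini

/-- The product `f w` matters: below the point `s₀` from which on the tails of `f w` are
integrable, the hypothesis only says that the tails of `f` vanish, and `f = 0` forces `f w = 0`. -/
theorem ae_mul_add_eq_zero_of_forall_tail_integral {f w : ℝ → ℝ} {T σ : ℝ}
    (hf : IntegrableOn (fun t => t * f t) (Ioc 0 T))
    (htail : ∀ s ∈ Icc 0 T, σ * (∫ t in s..T, f t * w t) + ∫ t in s..T, f t = 0) :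
    ∀ᵐ t ∂volume.restrict (Ioc 0 T), σ * (f t * w t) + f t = 0 := by
  rcases le_or_gt T 0 with hT | hT
  · simp [Ioc_eq_empty_of_le hT]
  set S := {s : ℝ | 0 < s ∧ IntegrableOn (fun t => f t * w t) (Ioc s T)}
  have hTS : T ∈ S := ⟨hT, by simp⟩
  have hSbdd : BddBelow S := ⟨0, fun s hs => hs.1.le⟩
  set s₀ := sInf S
  have hs₀ : 0 ≤ s₀ := le_csInf ⟨T, hTS⟩ fun s hs => hs.1.le
  have hs₀T : s₀ ≤ T := csInf_le hSbdd hTS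
  have hfloc : ∀ u, 0 < u → u ≤ T → IntervalIntegrable f volume u T := fun u hu huT =>
    (intervalIntegrable_iff_integrableOn_Ioc_of_le huT).2
      (integrableOn_Ioc_of_integrableOn_mul_id hf hu)
  have below : ∀ᵐ t ∂volume.restrict (Ioc 0 s₀), f t = 0 := by
    refine ae_restrict_Ioc_of_forall_Ioo fun u hu => ?_
    refine ae_restrict_Ioc_eq_zero_of_integral_tail_eq_zero hs₀T
      (hfloc u hu.1 (hu.2.le.trans hs₀T)) fun x hx => ?_
    have hx₀ : x ∈ Ioo 0 s₀ := ⟨hu.1.trans hx.1, hx.2⟩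
    have hfw : ¬ IntervalIntegrable (fun t => f t * w t) volume x T := by
      rw [intervalIntegrable_iff_integrableOn_Ioc_of_le (hx.2.le.trans hs₀T)]
      exact fun h => (csInf_le hSbdd ⟨hx₀.1, h⟩).not_gt hx₀.2
    have := htail x ⟨hx₀.1.le, hx.2.le.trans hs₀T⟩
    rwa [intervalIntegral.integral_undef hfw, mul_zero, zero_add] at this
  have above : ∀ᵐ t ∂volume.restrict (Ioc s₀ T), σ * (f t * w t) + f t = 0 := by
    refine ae_restrict_Ioc_of_forall_Ioo fun u hu => ?_
    obtain ⟨b, hbS, hbu⟩ := exists_lt_of_csInf_lt ⟨T, hTS⟩ hu.1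
    have hfw : ∀ x ∈ Icc u T, IntervalIntegrable (fun t => f t * w t) volume x T :=
      fun x hx => (intervalIntegrable_iff_integrableOn_Ioc_of_le hx.2).2
        (hbS.2.mono_set (Ioc_subset_Ioc_left (hbu.le.trans hx.1)))
    have hu₀ : 0 < u := hs₀.trans_lt hu.1
    refine ae_restrict_Ioc_eq_zero_of_integral_tail_eq_zero le_rfl
      (((hfw u ⟨le_rfl, hu.2.le⟩).const_mul σ).add (hfloc u hu₀ hu.2.le)) fun x hx => ?_
    rw [intervalIntegral.integral_add ((hfw x ⟨hx.1.le, hx.2.le⟩).const_mul σ)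
      (hfloc x (hu₀.trans hx.1) hx.2.le), intervalIntegral.integral_const_mul]
    exact htail x ⟨(hu₀.trans hx.1).le, hx.2.le⟩
  rw [← Ioc_union_Ioc_eq_Ioc hs₀ hs₀T, ae_restrict_union_iff]
  exact ⟨below.mono fun t ht => by simp [ht], above⟩

/-- When `t f w` is not integrable, `∫₀ᵀ f w` is `0` by convention and `hd₀` applies: then both
sides vanish. -/
theorem integral_eq_of_forall_eq_tail_integrals {f w d : ℝ → ℝ} {T σ : ℝ} (hT : 0 ≤ T)
    (hf : IntegrableOn (fun t => t * f t) (Ioc 0 T))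
    (hd : ∀ s ∈ Icc 0 T, d s = σ * (∫ t in s..T, f t * w t) + ∫ t in s..T, f t)
    (hd₀ : ∫ t in 0..T, f t * w t = 0 → ∀ s ∈ Icc 0 T, d s = 0) :
    ∫ s in 0..T, d s = σ * (∫ t in 0..T, t * (f t * w t)) + ∫ t in 0..T, t * f t := by
  by_cases hfw : IntegrableOn (fun t => t * (f t * w t)) (Ioc 0 T)
  · rw [intervalIntegral.integral_congr fun s hs => hd s (by rwa [uIcc_of_le hT] at hs),
      intervalIntegral.integral_add ((intervalIntegrable_integral_tail hT hfw).const_mul σ)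
        (intervalIntegrable_integral_tail hT hf),
      intervalIntegral.integral_const_mul, integral_integral_tail hT hfw,
      integral_integral_tail hT hf]
  have hA : ∫ t in 0..T, f t * w t = 0 := by
    refine intervalIntegral.integral_undef fun h => hfw ?_
    rw [intervalIntegrable_iff_integrableOn_Ioc_of_le hT] at h
    refine h.bdd_mul (c := T) aestronglyMeasurable_id ?_
    filter_upwards [ae_restrict_mem measurableSet_Ioc] with t ht
    rw [Real.norm_of_nonneg ht.1.le]
    exact ht.2
  have hae := ae_mul_add_eq_zero_of_forall_tail_integral (w := w) (σ := σ) hf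
    fun s hs => (hd s hs).symm.trans (hd₀ hA s hs)
  have hI : ∫ t in 0..T, t * f t = -(σ * ∫ t in 0..T, t * (f t * w t)) := by
    rw [← intervalIntegral.integral_const_mul, ← intervalIntegral.integral_neg,
      intervalIntegral.integral_of_le hT, intervalIntegral.integral_of_le hT]
    refine integral_congr_ae (hae.mono fun t ht => ?_)
    linear_combination t * ht
  rw [hI, intervalIntegral.integral_congr fun s hs => hd₀ hA s (by rwa [uIcc_of_le hT] at hs),
    intervalIntegral.integral_zero]
  ring

theorem intervalIntegral_mul_indicator_Icc {a b : ℝ} (hab : a ≤ b) (g : ℝ → ℝ) :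
    ∫ x in a..b, g x * (Icc a b).indicator (fun _ => (1 : ℝ)) x = ∫ x in a..b, g x := by
  refine intervalIntegral.integral_congr fun x hx => ?_
  rw [uIcc_of_le hab] at hx
  simp [indicator_of_mem hx]

section Malliavin

variable {Ω : Type*}

/-- Dividing `F` by a `G` that vanishes only at `ω` does not change `F`, while the quotient rule
evaluates to `_ / 0 = 0` at `ω`. -/
theorem malliavin_apply_eq_zero_of_quotient_rule {S : Type*} (D : (Ω → ℝ) → S → Ω → ℝ)
    (hquot : ∀ F G : Ω → ℝ, D (fun ω => F ω / G ω)
      = fun s ω => (G ω * D F s ω - F ω * D G s ω) / (G ω) ^ 2)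
    {F : Ω → ℝ} {ω : Ω} (hF : F ω = 0) (s : S) : D F s ω = 0 := by
  classical
  set G : Ω → ℝ := fun ω' => if ω' = ω then 0 else 1
  have hFG : (fun ω' => F ω' / G ω') = F := by
    funext ω'
    by_cases h : ω' = ω
    · simp [G, h, hF]
    · simp [G, h]
  simpa [hFG, G] using congrFun (congrFun (hquot F G) s) ω

/-- Expand `δ((F G) u) = δ(F (G u))` with `hmul` on both sides. -/
theorem integral_malliavin_mul_of_skorohod_mul (a b : ℝ) (D : (Ω → ℝ) → ℝ → Ω → ℝ)
    (δ : (ℝ → Ω → ℝ) → Ω → ℝ)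
    (hmul : ∀ (F : Ω → ℝ) (u : ℝ → Ω → ℝ),
      δ (fun s ω => F ω * u s ω) = fun ω => F ω * δ u ω - ∫ s in a..b, D F s ω * u s ω)
    (F G : Ω → ℝ) (u : ℝ → Ω → ℝ) (ω : Ω) :
    ∫ s in a..b, D (fun ω => F ω * G ω) s ω * u s ω
      = F ω * (∫ s in a..b, D G s ω * u s ω) + G ω * ∫ s in a..b, D F s ω * u s ω := by
  have hFG := congrFun (hmul (fun ω => F ω * G ω) u) ω
  have hF := congrFun (hmul F fun s ω => G ω * u s ω) ω
  have hG := congrFun (hmul G u) ω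
  have hassoc : (fun s ω => F ω * G ω * u s ω) = fun s ω => F ω * (G ω * u s ω) := by
    funext s ω; ring
  have hpull : ∫ s in a..b, D F s ω * (G ω * u s ω) = G ω * ∫ s in a..b, D F s ω * u s ω := by
    rw [← intervalIntegral.integral_const_mul]
    congr 1; funext s; ring
  rw [hassoc, hF, hpull, hG] at hFG
  linear_combination hFG

end Malliavin

theorem asian_vega_skorohod_general
    {Ω : Type*}
    (T σ : ℝ) (hT : 0 < T)
    (X : ℝ → Ω → ℝ) (W : ℝ → Ω → ℝ)
    (D : (Ω → ℝ) → ℝ → Ω → ℝ)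
    (δ : (ℝ → Ω → ℝ) → Ω → ℝ)
    (I : ℕ → Ω → ℝ) (hI : ∀ n ω, I n ω = ∫ t in (0:ℝ)..T, t ^ n * X t ω)
    (hI1 : ∀ ω, I 1 ω ≠ 0)
    -- δ(F u) = F δ(u) − ∫₀ᵀ D_s F u_s ds
    (hfact : ∀ (F : Ω → ℝ) (u : ℝ → Ω → ℝ),
      δ (fun s ω => F ω * u s ω)
        = fun ω => F ω * δ u ω - ∫ s in (0:ℝ)..T, D F s ω * u s ω)
    -- δ(1_{[0,T]}) = W_T
    (hδone : δ (fun s _ => Set.indicator (Set.Icc (0:ℝ) T) (fun _ => (1:ℝ)) s)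
      = fun ω => W T ω)
    -- D_s ∫₀ᵀ X_t W_t dt = σ ∫ₛᵀ X_t W_t dt + ∫ₛᵀ X_t dt (from D_s(X_tW_t) = X_t(σW_t+1))
    (hDXW : ∀ ω, ∀ s ∈ Set.Icc (0:ℝ) T,
      D (fun ω => ∫ t in (0:ℝ)..T, X t ω * W t ω) s ω
        = σ * (∫ t in s..T, X t ω * W t ω) + ∫ t in s..T, X t ω)
    -- ∫₀ᵀ D_s I_{(1)} ds = σ I_{(2)}
    (hDI1 : ∀ ω, (∫ s in (0:ℝ)..T, D (I 1) s ω) = σ * I 2 ω)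
    -- quotient rule for D
    (hquot : ∀ F G : Ω → ℝ, D (fun ω => F ω / G ω)
      = fun s ω => (G ω * D F s ω - F ω * D G s ω) / (G ω) ^ 2) :
    δ (fun s ω => ((∫ t in (0:ℝ)..T, X t ω * W t ω) / I 1 ω) *
        Set.indicator (Set.Icc (0:ℝ) T) (fun _ => (1:ℝ)) s)
      = fun ω => ((∫ t in (0:ℝ)..T, X t ω * W t ω) / I 1 ω) * W T ω
          - σ * (∫ t in (0:ℝ)..T, t * (X t ω * W t ω)) / I 1 ω - 1
          + σ * (∫ t in (0:ℝ)..T, X t ω * W t ω) * I 2 ω / (I 1 ω) ^ 2 := by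
  funext ω
  have hI1ω : I 1 ω = ∫ t in (0:ℝ)..T, t * X t ω := by simp [hI]
  have hX : IntegrableOn (fun t => t * X t ω) (Ioc 0 T) := by
    rw [← intervalIntegrable_iff_integrableOn_Ioc_of_le hT.le]
    by_contra h
    exact hI1 ω (hI1ω.trans (intervalIntegral.integral_undef h))
  have hDA := integral_eq_of_forall_eq_tail_integrals hT.le hX (hDXW ω)
    fun hA s _ => malliavin_apply_eq_zero_of_quotient_rule D hquot hA s
  have hprod := integral_malliavin_mul_of_skorohod_mul 0 T D δ hfact
    (fun ω => (∫ t in (0:ℝ)..T, X t ω * W t ω) / I 1 ω) (I 1)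
    (fun s _ => (Icc (0:ℝ) T).indicator (fun _ => (1:ℝ)) s) ω
  simp only [div_mul_cancel₀ _ (hI1 _), intervalIntegral_mul_indicator_Icc hT.le] at hprod
  rw [hDI1, hDA, ← hI1ω] at hprod
  rw [congrFun (hfact _ _) ω, hδone, intervalIntegral_mul_indicator_Icc hT.le]
  field_simp [hI1 ω] at hprod ⊢
  linear_combination hprod

/-- Skorohod integral identity for Asian Vega:
`δ(1_{[0,T]} (∫₀ᵀ X_t W_t dt)/I_{(1)}) = (∫₀ᵀ X_t W_t dt / I_{(1)}) W_T
− σ(∫₀ᵀ t X_t W_t dt)/I_{(1)} − 1 + σ(∫₀ᵀ X_t W_t dt) I_{(2)}/I_{(1)}²`. -/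
theorem asian_vega_skorohod
    {Ω : Type*}
    (T σ : ℝ) (hT : 0 < T) (hσ : σ ≠ 0)
    (X : ℝ → Ω → ℝ) (W : ℝ → Ω → ℝ)
    (D : (Ω → ℝ) → ℝ → Ω → ℝ)
    (δ : (ℝ → Ω → ℝ) → Ω → ℝ)
    (I : ℕ → Ω → ℝ) (hI : ∀ n ω, I n ω = ∫ t in (0:ℝ)..T, t ^ n * X t ω)
    (hI1 : ∀ ω, I 1 ω ≠ 0)
    -- δ(F u) = F δ(u) − ∫₀ᵀ D_s F u_s ds
    (hfact : ∀ (F : Ω → ℝ) (u : ℝ → Ω → ℝ),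
      δ (fun s ω => F ω * u s ω)
        = fun ω => F ω * δ u ω - ∫ s in (0:ℝ)..T, D F s ω * u s ω)
    -- δ(1_{[0,T]}) = W_T
    (hδone : δ (fun s _ => Set.indicator (Set.Icc (0:ℝ) T) (fun _ => (1:ℝ)) s)
      = fun ω => W T ω)
    -- D_s ∫₀ᵀ X_t W_t dt = σ ∫ₛᵀ X_t W_t dt + ∫ₛᵀ X_t dt (from D_s(X_tW_t) = X_t(σW_t+1))
    (hDXW : ∀ ω, ∀ s ∈ Set.Icc (0:ℝ) T,
      D (fun ω => ∫ t in (0:ℝ)..T, X t ω * W t ω) s ω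
        = σ * (∫ t in s..T, X t ω * W t ω) + ∫ t in s..T, X t ω)
    -- ∫₀ᵀ D_s I_{(1)} ds = σ I_{(2)}
    (hDI1 : ∀ ω, (∫ s in (0:ℝ)..T, D (I 1) s ω) = σ * I 2 ω)
    -- quotient rule for D
    (hquot : ∀ F G : Ω → ℝ, D (fun ω => F ω / G ω)
      = fun s ω => (G ω * D F s ω - F ω * D G s ω) / (G ω) ^ 2) :
    δ (fun s ω => ((∫ t in (0:ℝ)..T, X t ω * W t ω) / I 1 ω) *
        Set.indicator (Set.Icc (0:ℝ) T) (fun _ => (1:ℝ)) s)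
      = fun ω => ((∫ t in (0:ℝ)..T, X t ω * W t ω) / I 1 ω) * W T ω
          - σ * (∫ t in (0:ℝ)..T, t * (X t ω * W t ω)) / I 1 ω - 1
          + σ * (∫ t in (0:ℝ)..T, X t ω * W t ω) * I 2 ω / (I 1 ω) ^ 2 :=
  asian_vega_skorohod_general T σ hT X W D δ I hI hI1 hfact hδone hDXW hDI1 hquot
end

section
/- Asian Gamma via differentiating Delta: If Δ(x) = (e^{−rT}/(σx)) E[Φ(I_{(0)}/T)(−σ + (I_{(0)}/I_{(1)}) W_T + σ I_{(0)} I_{(2)}/I_{(1)}²)], then since I_{(n)}(x) = x I_{(n)}(1) (so the ratios I_{(0)}/I_{(1)} and I_{(0)}I_{(2)}/I_{(1)}² are independent of x), Γ = ∂Δ/∂x = −Δ/x + (e^{−rT}/(σx)) E[Φ'(I_{(0)}/T)(I_{(0)}/(xT))(−σ + (I_{(0)}/I_{(1)}) W_T + σ I_{(0)} I_{(2)}/I_{(1)}²)]. -/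
/-!
As `I_{(0)}(y) = y I_{(0)}(1)` and `w` does not depend on `y`, the Delta is
`Δ(y) = e^{-rT}/(σ y) · G(y)` with `G(y) = E[Φ(y g) w]`, `g = I_{(0)}(1)/T`.
The chain rule gives `∂_y Φ(y g) w = Φ'(y g) g w`, which is dominated by `C |g w|` when
`|Φ'| ≤ C`; as `g, w ∈ L²`, `g w` is integrable, so `G` may be differentiated under the
expectation, and the product rule with `∂_y (1/y) = -1/y²` gives the Gamma.
-/

open MeasureTheory

theorem hasDerivAt_integral_comp_mul_mul {Ω : Type*} [MeasurableSpace Ω] {μ : Measure Ω}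
    {Φ : ℝ → ℝ} {g w : Ω → ℝ} {C x : ℝ} (hΦ : Differentiable ℝ Φ) (hC : ∀ y, |deriv Φ y| ≤ C)
    (hg : AEStronglyMeasurable g μ) (hw : AEStronglyMeasurable w μ) (hgw : Integrable (g * w) μ)
    (hint : Integrable (fun ω => Φ (x * g ω) * w ω) μ) :
    HasDerivAt (fun y => ∫ ω, Φ (y * g ω) * w ω ∂μ)
      (∫ ω, deriv Φ (x * g ω) * g ω * w ω ∂μ) x := by
  have hmeas : ∀ y, AEStronglyMeasurable (fun ω => Φ (y * g ω) * w ω) μ := fun y =>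
    (hΦ.continuous.comp_aestronglyMeasurable (hg.const_mul y)).mul hw
  have hΦ'g : AEStronglyMeasurable (fun ω => deriv Φ (x * g ω)) μ :=
    ((measurable_deriv Φ).comp_aemeasurable (hg.const_mul x).aemeasurable).aestronglyMeasurable
  have hmeas' : AEStronglyMeasurable (fun ω => deriv Φ (x * g ω) * g ω * w ω) μ :=
    (hΦ'g.mul hg).mul hw
  have hbound : ∀ ω y, |deriv Φ (y * g ω) * g ω * w ω| ≤ C * |(g * w) ω| := fun ω y => by
    rw [mul_assoc, abs_mul, Pi.mul_apply]
    exact mul_le_mul_of_nonneg_right (hC _) (abs_nonneg _)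
  have hchain : ∀ ω y, HasDerivAt (fun y => Φ (y * g ω) * w ω)
      (deriv Φ (y * g ω) * g ω * w ω) y := fun ω y =>
    (((hΦ _).hasDerivAt.comp y ((hasDerivAt_id y).mul_const (g ω))).mul_const (w ω)).congr_deriv
      (by simp)
  exact (hasDerivAt_integral_of_dominated_loc_of_deriv_le (Metric.ball_mem_nhds x one_pos)
    (Filter.Eventually.of_forall hmeas) hint hmeas'
    (Filter.Eventually.of_forall fun ω y _ => hbound ω y) (hgw.abs.const_mul C)
    (Filter.Eventually.of_forall fun ω y _ => hchain ω y)).2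

theorem HasDerivAt.div_mul_mul {G : ℝ → ℝ} {G' x : ℝ} (c a : ℝ) (hG : HasDerivAt G G' x)
    (hx : x ≠ 0) :
    HasDerivAt (fun y => c / (a * y) * G y) (-(c / (a * x) * G x) / x + c / (a * x) * G') x := by
  have hfun : (fun y => c / (a * y) * G y) = fun y => c / a * (y⁻¹ * G y) := by
    funext y
    ring
  rw [hfun]
  refine (((hasDerivAt_inv hx).mul hG).const_mul (c / a)).congr_deriv ?_
  field_simp

theorem asian_gamma_from_delta_general
    {Ω : Type*} [MeasurableSpace Ω] (μ : Measure Ω)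
    (T r σ x : ℝ) (hx : 0 < x)
    -- I_{(n)} at initial value 1; I_{(n)}(x) = x · Ione n
    (Ione : ℕ → Ω → ℝ)
    -- the (x-independent) Malliavin weight of the Asian Delta formula
    (w : Ω → ℝ)
    (Φ : ℝ → ℝ) (hΦ : ContDiff ℝ 1 Φ) (hΦ' : ∃ C, ∀ y, |deriv Φ y| ≤ C)
    -- integrability, justifying differentiation under the expectation
    (hIL2 : MemLp (Ione 0) 2 μ) (hwL2 : MemLp w 2 μ)
    (hint : ∀ y : ℝ, Integrable (fun ω => Φ (y * Ione 0 ω / T) * w ω) μ)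
    -- the Asian Delta as a function of the initial value y
    (Δ : ℝ → ℝ)
    (hΔ : ∀ y : ℝ, Δ y
      = Real.exp (-(r * T)) / (σ * y) * ∫ ω, Φ (y * Ione 0 ω / T) * w ω ∂μ) :
    deriv Δ x
      = -(Δ x) / x + Real.exp (-(r * T)) / (σ * x) *
          ∫ ω, deriv Φ (x * Ione 0 ω / T) * (x * Ione 0 ω / (x * T)) * w ω ∂μ := by
  obtain ⟨C, hC⟩ := hΦ'
  have hg : MemLp (fun ω => Ione 0 ω / T) 2 μ := by
    simpa only [div_eq_mul_inv] using hIL2.mul_const T⁻¹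
  simp_rw [mul_div_mul_left _ _ hx.ne', mul_div_assoc] at hint hΔ ⊢
  have hG := hasDerivAt_integral_comp_mul_mul (hΦ.differentiable one_ne_zero) hC
    hg.aestronglyMeasurable hwL2.aestronglyMeasurable (hg.integrable_mul hwL2) (hint x)
  obtain rfl : Δ = _ := funext hΔ
  exact (hG.div_mul_mul _ σ hx.ne').deriv

/-- Asian Gamma via differentiating Delta: since `X_t(x) = x exp(X̃_t)` gives
`I_{(n)}(x) = x I_{(n)}(1)` (so the ratios `I_{(0)}/I_{(1)}` and `I_{(0)}I_{(2)}/I_{(1)}²`,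
hence the Malliavin weight `w`, are independent of `x`), the Delta
`Δ(y) = (e^{−rT}/(σy)) E[Φ(I_{(0)}(y)/T) w]` satisfies
`Γ = ∂Δ/∂x = −Δ(x)/x + (e^{−rT}/(σx)) E[Φ'(I_{(0)}/T)(I_{(0)}/(xT)) w]`. -/
theorem asian_gamma_from_delta
    {Ω : Type*} [MeasurableSpace Ω] (μ : Measure Ω) [IsProbabilityMeasure μ]
    (T r σ x : ℝ) (hT : 0 < T) (hσ : σ ≠ 0) (hx : 0 < x)
    (L : ℝ → Ω → ℝ)   -- the Lévy process X̃, so X_t(x) = x exp(X̃_t)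
    (WT : Ω → ℝ)
    -- I_{(n)} at initial value 1; I_{(n)}(x) = x · Ione n
    (Ione : ℕ → Ω → ℝ)
    (hIone : ∀ n ω, Ione n ω = ∫ t in (0:ℝ)..T, t ^ n * Real.exp (L t ω))
    (hI1 : ∀ ω, Ione 1 ω ≠ 0)
    -- the (x-independent) Malliavin weight of the Asian Delta formula
    (w : Ω → ℝ)
    (hw : ∀ ω, w ω = -σ + (Ione 0 ω / Ione 1 ω) * WT ω
      + σ * Ione 0 ω * Ione 2 ω / (Ione 1 ω) ^ 2)
    (Φ : ℝ → ℝ) (hΦ : ContDiff ℝ 1 Φ) (hΦ' : ∃ C, ∀ y, |deriv Φ y| ≤ C)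
    -- integrability, justifying differentiation under the expectation
    (hIL2 : MemLp (Ione 0) 2 μ) (hwL2 : MemLp w 2 μ)
    (hint : ∀ y : ℝ, Integrable (fun ω => Φ (y * Ione 0 ω / T) * w ω) μ)
    (hint' : Integrable (fun ω => deriv Φ (x * Ione 0 ω / T) * Ione 0 ω * w ω) μ)
    -- the Asian Delta as a function of the initial value y
    (Δ : ℝ → ℝ)
    (hΔ : ∀ y : ℝ, Δ y
      = Real.exp (-(r * T)) / (σ * y) * ∫ ω, Φ (y * Ione 0 ω / T) * w ω ∂μ) :
    deriv Δ x
      = -(Δ x) / x + Real.exp (-(r * T)) / (σ * x) *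
          ∫ ω, deriv Φ (x * Ione 0 ω / T) * (x * Ione 0 ω / (x * T)) * w ω ∂μ :=
  asian_gamma_from_delta_general μ T r σ x hx Ione w Φ hΦ hΦ' hIL2 hwL2 hint Δ hΔ
end
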